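/- Let N be a norm on G, σ > 0 with ∫_G N(g)^{-σ} dμ(g) < ∞, Γ a discrete subgroup of G, H a closed subgroup of G, and Δ = H ∩ Γ. Suppose f : G → ℂ satisfies f(δg) = f(g) for all δ ∈ Δ and g ∈ G, and |f(g)| ≤ c·N_Δ(g)^{-σ} for some constant c and all g ∈ G. Then there is a constant C such that for every g ∈ G the family (f(γg))_{γ ∈ Δ\Γ} is absolutely summable, with ∑_{γ∈Δ\Γ} |f(γg)| ≤ C·N(g)^σ. -/

import Mathlib

/-!
Pick a neighbourhood `U` of `1` on which `N < b` and whose translates `γU`, `γ ∈ Γ`, are pairwise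
disjoint (discreteness of `Γ`). On `γU` submultiplicativity gives `N ≤ b N(γ)`, so
`μ(U) b^{-σ} ∑_{γ ∈ Γ} N(γ)^{-σ} ≤ ∫ N^{-σ} dμ < ∞`. Picking in each coset `Δγ` a representative
with `N(δγ) < 2 N_Δ(γ)` turns this into `∑_{Δ\Γ} N_Δ(γ)^{-σ} < ∞`, and
`N_Δ(γ) ≤ N_Δ(γg) N(g)` yields the bound with `C = c ∑_{Δ\Γ} N_Δ(γ)^{-σ}`.
-/

open MeasureTheory Topology Pointwise Function

section

variable {G : Type*} [Group G] [TopologicalSpace G] [IsTopologicalGroup G]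

theorem Subgroup.exists_mem_nhds_one_pairwise_disjoint_smul (Γ : Subgroup G)
    [DiscreteTopology Γ] : ∃ U ∈ 𝓝 (1 : G), Pairwise (Disjoint on fun γ : Γ => (γ : G) • U) := by
  obtain ⟨V, hVopen, hV⟩ := isOpen_induced_iff.mp (isOpen_discrete ({1} : Set Γ))
  have hΓV : ∀ γ : Γ, (γ : G) ∈ V → γ = 1 := fun γ hγ => by
    simpa using (Set.ext_iff.mp hV γ).mp hγ
  obtain ⟨U, hU, hUV⟩ := exists_nhds_split_inv (hVopen.mem_nhds (by simpa using hV.ge rfl))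
  refine ⟨U, hU, fun γ γ' hne => Set.disjoint_left.mpr ?_⟩
  rintro _ ⟨u, hu, rfl⟩ ⟨u', hu', heq⟩
  refine hne (inv_mul_eq_one.mp (hΓV (γ'⁻¹ * γ) ?_)).symm
  have : (γ' : G)⁻¹ * γ = u' / u := by
    simp only [smul_eq_mul] at heq
    rw [eq_div_iff_mul_eq', mul_assoc, ← heq, inv_mul_cancel_left]
  simpa [this] using hUV u' hu' u hu

theorem ofReal_rpow_neg_mul_measure_le_setLIntegral [MeasurableSpace G] [BorelSpace G]
    (μ : Measure G) [μ.IsMulLeftInvariant] {N : G → ℝ} (hNpos : ∀ g, 0 < N g)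
    (hNmul : ∀ g h : G, N (g * h) ≤ N g * N h) {σ : ℝ} (hσ : 0 ≤ σ) {U : Set G}
    (hU : IsOpen U) {b : ℝ} (hUb : ∀ u ∈ U, N u ≤ b) (g : G) :
    ENNReal.ofReal ((N g * b) ^ (-σ)) * μ U
      ≤ ∫⁻ x in g • U, ENNReal.ofReal (N x ^ (-σ)) ∂μ := by
  rw [← measure_smul μ g U, ← setLIntegral_const]
  refine setLIntegral_mono' (hU.smul g).measurableSet ?_
  rintro _ ⟨u, hu, rfl⟩
  refine ENNReal.ofReal_le_ofReal (Real.rpow_le_rpow_of_nonpos (hNpos _) ?_ (neg_nonpos.mpr hσ))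
  exact (hNmul g u).trans (mul_le_mul_of_nonneg_left (hUb u hu) (hNpos g).le)

theorem summable_rpow_neg_of_discreteTopology [MeasurableSpace G] [BorelSpace G]
    (μ : Measure G) [μ.IsMulLeftInvariant] [μ.IsOpenPosMeasure] {N : G → ℝ}
    (hNcont : Continuous N) (hNpos : ∀ g, 0 < N g) (hNmul : ∀ g h : G, N (g * h) ≤ N g * N h)
    {σ : ℝ} (hσ : 0 ≤ σ) (hint : ∫⁻ g, ENNReal.ofReal (N g ^ (-σ)) ∂μ < ⊤)
    (Γ : Subgroup G) [DiscreteTopology Γ] : Summable fun γ : Γ => N γ ^ (-σ) := by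
  obtain ⟨W, hW, hdisj⟩ := Γ.exists_mem_nhds_one_pairwise_disjoint_smul
  set b := N 1 + 1
  set U := interior W ∩ N ⁻¹' Set.Iio b
  have hUopen : IsOpen U := isOpen_interior.inter (isOpen_Iio.preimage hNcont)
  have hUb : ∀ u ∈ U, N u ≤ b := fun u hu => hu.2.le
  have hκ : ENNReal.ofReal (b ^ (-σ)) * μ U ≠ 0 := by
    refine mul_ne_zero ?_ (hUopen.measure_ne_zero μ ⟨1, mem_interior_iff_mem_nhds.mpr hW, ?_⟩)
    · exact ENNReal.ofReal_ne_zero_iff.mpr (Real.rpow_pos_of_pos (by linarith [hNpos 1]) _)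
    · exact lt_add_one (N 1)
  set F : G → ENNReal := fun x => ENNReal.ofReal (N x ^ (-σ))
  -- Measuring with `μ.withDensity F` avoids any countability assumption on `Γ`.
  have hsum_le : (∑' γ : Γ, F γ) * (ENNReal.ofReal (b ^ (-σ)) * μ U) ≤ ∫⁻ x, F x ∂μ := by
    calc (∑' γ : Γ, F γ) * (ENNReal.ofReal (b ^ (-σ)) * μ U)
        ≤ ∑' γ : Γ, ∫⁻ x in (γ : G) • U, F x ∂μ := by
          rw [← ENNReal.tsum_mul_right]
          refine ENNReal.tsum_le_tsum fun γ => ?_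
          rw [← mul_assoc, ← ENNReal.ofReal_mul (Real.rpow_nonneg (hNpos γ).le _),
            ← Real.mul_rpow (hNpos γ).le (by linarith [hNpos 1])]
          exact ofReal_rpow_neg_mul_measure_le_setLIntegral μ hNpos hNmul hσ hUopen hUb γ
      _ = ∑' γ : Γ, μ.withDensity F ((γ : G) • U) := by
          simp only [withDensity_apply _ (hUopen.smul _).measurableSet]
      _ ≤ μ.withDensity F (⋃ γ : Γ, (γ : G) • U) :=
          tsum_meas_le_meas_iUnion_of_disjoint _ (fun γ => (hUopen.smul _).measurableSet)
            fun γ γ' hne => (hdisj hne).mono (Set.smul_set_mono fun u hu => interior_subset hu.1)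
              (Set.smul_set_mono fun u hu => interior_subset hu.1)
      _ ≤ μ.withDensity F Set.univ := measure_mono (Set.subset_univ _)
      _ = ∫⁻ x, F x ∂μ := by rw [withDensity_apply _ MeasurableSet.univ, Measure.restrict_univ]
  have htsum : ∑' γ : Γ, F γ ≠ ⊤ :=
    (ENNReal.lt_top_of_mul_ne_top_left (hsum_le.trans_lt hint).ne hκ).ne
  simpa [F, ENNReal.toReal_ofReal (Real.rpow_nonneg (hNpos _).le _)]
    using ENNReal.summable_toReal htsum

end

theorem QuotientGroup.injective_mul_out_rightRel {α : Type*} [Group α] {K : Subgroup α}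
    {δ : Quotient (QuotientGroup.rightRel K) → α} (hδ : ∀ q, δ q ∈ K) :
    Injective fun q => δ q * q.out := by
  intro q q' (h : δ q * q.out = δ q' * q'.out)
  refine Quotient.out_equiv_out.mp (QuotientGroup.rightRel_apply.mpr ?_)
  have : q'.out * q.out⁻¹ = (δ q')⁻¹ * δ q := by
    rw [mul_inv_eq_iff_eq_mul, mul_assoc, h, inv_mul_cancel_left]
  exact this ▸ K.mul_mem (K.inv_mem (hδ q')) (hδ q)

section RelNorm

variable {G : Type*} [Group G] {N : G → ℝ}

noncomputable def relNorm (N : G → ℝ) (Δ : Subgroup G) (g : G) : ℝ := ⨅ δ : Δ, N (δ * g)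

variable (hN1 : ∀ g, 1 ≤ N g)
include hN1

theorem one_le_relNorm (Δ : Subgroup G) (g : G) : 1 ≤ relNorm N Δ g :=
  le_ciInf fun _ => hN1 _

theorem relNorm_le {Δ : Subgroup G} (δ : Δ) (g : G) : relNorm N Δ g ≤ N (δ * g) :=
  ciInf_le ⟨1, by rintro _ ⟨δ, rfl⟩; exact hN1 _⟩ δ

theorem relNorm_le_relNorm_mul_mul (hNinv : ∀ g : G, N g⁻¹ = N g)
    (hNmul : ∀ g h : G, N (g * h) ≤ N g * N h) (Δ : Subgroup G) (x g : G) :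
    relNorm N Δ x ≤ relNorm N Δ (x * g) * N g := by
  have hNg : 0 < N g := one_pos.trans_le (hN1 g)
  rw [← div_le_iff₀ hNg]
  refine le_ciInf fun δ => (div_le_iff₀ hNg).mpr ?_
  calc relNorm N Δ x ≤ N (δ * x) := relNorm_le hN1 δ x
    _ = N (δ * (x * g) * g⁻¹) := by group
    _ ≤ N (δ * (x * g)) * N g := (hNmul _ _).trans_eq (by rw [hNinv])

theorem relNorm_mul_rpow_neg_le (hNinv : ∀ g : G, N g⁻¹ = N g)
    (hNmul : ∀ g h : G, N (g * h) ≤ N g * N h) {σ : ℝ} (hσ : 0 ≤ σ) (Δ : Subgroup G) (x g : G) :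
    relNorm N Δ (x * g) ^ (-σ) ≤ relNorm N Δ x ^ (-σ) * N g ^ σ := by
  have hNg : 0 < N g := one_pos.trans_le (hN1 g)
  have hx : 0 < relNorm N Δ x := one_pos.trans_le (one_le_relNorm hN1 Δ x)
  calc relNorm N Δ (x * g) ^ (-σ) ≤ (relNorm N Δ x / N g) ^ (-σ) :=
        Real.rpow_le_rpow_of_nonpos (div_pos hx hNg)
          ((div_le_iff₀ hNg).mpr (relNorm_le_relNorm_mul_mul hN1 hNinv hNmul Δ x g))
          (neg_nonpos.mpr hσ)
    _ = relNorm N Δ x ^ (-σ) * N g ^ σ := by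
        rw [Real.div_rpow hx.le hNg.le, Real.rpow_neg hNg.le, div_inv_eq_mul]

theorem summable_relNorm_out_rpow_neg {Γ Δ : Subgroup G} (hΔ : Δ ≤ Γ) {σ : ℝ} (hσ : 0 ≤ σ)
    (hsum : Summable fun γ : Γ => N γ ^ (-σ)) :
    Summable fun q : Quotient (QuotientGroup.rightRel (Δ.subgroupOf Γ)) =>
      relNorm N Δ (q.out : G) ^ (-σ) := by
  have hNpos : ∀ g, 0 < N g := fun g => one_pos.trans_le (hN1 g)
  have hnear : ∀ q : Quotient (QuotientGroup.rightRel (Δ.subgroupOf Γ)),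
      ∃ δ : Δ, N (δ * q.out) < 2 * relNorm N Δ q.out := fun q =>
    exists_lt_of_ciInf_lt
      (show relNorm N Δ q.out < _ by linarith [one_le_relNorm hN1 Δ (q.out : G)])
  choose δ hδ using hnear
  have hinj := QuotientGroup.injective_mul_out_rightRel
    (δ := fun q => (⟨δ q, hΔ (δ q).2⟩ : Γ)) fun q => Subgroup.mem_subgroupOf.mpr (δ q).2
  refine ((hsum.comp_injective hinj).mul_left (2 ^ σ)).of_nonneg_of_le
    (fun q => Real.rpow_nonneg (one_pos.trans_le (one_le_relNorm hN1 Δ _)).le _) fun q => ?_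
  have hq := one_le_relNorm hN1 Δ (q.out : G)
  calc relNorm N Δ q.out ^ (-σ) = 2 ^ σ * (2 * relNorm N Δ q.out) ^ (-σ) := by
        rw [Real.mul_rpow zero_le_two (by linarith), ← mul_assoc, ← Real.rpow_add two_pos,
          add_neg_cancel, Real.rpow_zero, one_mul]
    _ ≤ 2 ^ σ * N (δ q * q.out) ^ (-σ) :=
        mul_le_mul_of_nonneg_left
          (Real.rpow_le_rpow_of_nonpos (hNpos _) (hδ q).le (neg_nonpos.mpr hσ))
          (Real.rpow_nonneg zero_le_two _)

end RelNorm

theorem stmt3_general {G : Type*} [Group G] [TopologicalSpace G] [IsTopologicalGroup G]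
    [MeasurableSpace G] [BorelSpace G]
    (μ : Measure G) [μ.IsHaarMeasure]
    (N : G → ℝ) (hNcont : Continuous N) (hN1 : ∀ g, 1 ≤ N g)
    (hNinv : ∀ g : G, N g⁻¹ = N g) (hNmul : ∀ g h : G, N (g * h) ≤ N g * N h)
    (σ : ℝ) (hσ : 0 < σ)
    (hint : ∫⁻ g, ENNReal.ofReal (N g ^ (-σ)) ∂μ < ⊤)
    (Γ H : Subgroup G) (hΓ : DiscreteTopology Γ)
    (f : G → ℂ)
    (c : ℝ)
    (hfbd : ∀ g : G, ‖f g‖ ≤ c * (⨅ δ : ↥(H ⊓ Γ), N ((δ : G) * g)) ^ (-σ)) :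
    ∃ C : ℝ, ∀ g : G,
      Summable (fun q : Quotient (QuotientGroup.rightRel ((H ⊓ Γ).subgroupOf Γ)) =>
        ‖f ((q.out : G) * g)‖) ∧
      ∑' q : Quotient (QuotientGroup.rightRel ((H ⊓ Γ).subgroupOf Γ)),
          ‖f ((q.out : G) * g)‖ ≤ C * N g ^ σ := by
  have hNpos : ∀ g, 0 < N g := fun g => one_pos.trans_le (hN1 g)
  have hsum := summable_relNorm_out_rpow_neg hN1 (inf_le_right : H ⊓ Γ ≤ Γ) hσ.le
    (summable_rpow_neg_of_discreteTopology μ hNcont hNpos hNmul hσ.le hint Γ)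
  have hc : 0 ≤ c := nonneg_of_mul_nonneg_left ((norm_nonneg _).trans (hfbd 1))
    (Real.rpow_pos_of_pos (one_pos.trans_le (one_le_relNorm hN1 _ 1)) _)
  refine ⟨c * ∑' q : Quotient (QuotientGroup.rightRel ((H ⊓ Γ).subgroupOf Γ)),
    relNorm N (H ⊓ Γ) q.out ^ (-σ), fun g => ?_⟩
  have hbound : ∀ q : Quotient (QuotientGroup.rightRel ((H ⊓ Γ).subgroupOf Γ)),
      ‖f ((q.out : G) * g)‖ ≤ c * relNorm N (H ⊓ Γ) q.out ^ (-σ) * N g ^ σ := fun q => by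
    rw [mul_assoc]
    exact (hfbd _).trans
      (mul_le_mul_of_nonneg_left (relNorm_mul_rpow_neg_le hN1 hNinv hNmul hσ.le _ _ g) hc)
  have hmajorant := (hsum.mul_left c).mul_right (N g ^ σ)
  have hsummable := hmajorant.of_nonneg_of_le (fun _ => norm_nonneg _) hbound
  refine ⟨hsummable, (hsummable.tsum_le_tsum hbound hmajorant).trans_eq ?_⟩
  rw [tsum_mul_right, tsum_mul_left]

/-- Let `G` be a locally compact Hausdorff second countable unimodular topological group with
Haar measure `μ`, `N` a norm on `G`, and `σ > 0` with `∫_G N(g)^{-σ} dμ(g) < ∞`.  Let `Γ` be a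
discrete subgroup, `H` a closed subgroup, and `Δ = H ∩ Γ`.  If `f : G → ℂ` is left
`Δ`-invariant and `|f(g)| ≤ c·N_Δ(g)^{-σ}` where `N_Δ(g) = inf_{δ∈Δ} N(δg)`, then there is a
constant `C` such that for every `g ∈ G` the family `(f(γg))_{γ∈Δ\Γ}` is absolutely summable,
with `∑_{γ∈Δ\Γ} |f(γg)| ≤ C·N(g)^σ`. -/
theorem stmt3 {G : Type*} [Group G] [TopologicalSpace G] [IsTopologicalGroup G]
    [LocallyCompactSpace G] [T2Space G] [SecondCountableTopology G]
    [MeasurableSpace G] [BorelSpace G]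
    (μ : Measure G) [μ.IsHaarMeasure] [μ.IsMulRightInvariant]
    (N : G → ℝ) (hNcont : Continuous N) (hN1 : ∀ g, 1 ≤ N g)
    (hNinv : ∀ g : G, N g⁻¹ = N g) (hNmul : ∀ g h : G, N (g * h) ≤ N g * N h)
    (σ : ℝ) (hσ : 0 < σ)
    (hint : ∫⁻ g, ENNReal.ofReal (N g ^ (-σ)) ∂μ < ⊤)
    (Γ H : Subgroup G) (hΓ : DiscreteTopology Γ) (hH : IsClosed (H : Set G))
    (f : G → ℂ)
    (hfinv : ∀ δ ∈ H ⊓ Γ, ∀ g : G, f (δ * g) = f g)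
    (c : ℝ)
    (hfbd : ∀ g : G, ‖f g‖ ≤ c * (⨅ δ : ↥(H ⊓ Γ), N ((δ : G) * g)) ^ (-σ)) :
    ∃ C : ℝ, ∀ g : G,
      Summable (fun q : Quotient (QuotientGroup.rightRel ((H ⊓ Γ).subgroupOf Γ)) =>
        ‖f ((q.out : G) * g)‖) ∧
      ∑' q : Quotient (QuotientGroup.rightRel ((H ⊓ Γ).subgroupOf Γ)),
          ‖f ((q.out : G) * g)‖ ≤ C * N g ^ σ :=
  stmt3_general μ N hNcont hN1 hNinv hNmul σ hσ hint Γ H hΓ f c hfbd
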